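/- arXiv:2303.10322 — 3 statements merged into one kernel-verified Lean document; each statement's English description precedes it below -/
import Mathlib

section
/- Consider real matrices with the following data: a positive semidefinite symmetric matrix Σ ∈ ℝ^{n_x×n_x} with Σ ⪯ σ̄I, a matrix H ∈ ℝ^{n_y×n_x} with ‖H‖ ≤ h̄, a matrix U^y ∈ ℝ^{n_y×n_y} with ‖U^y‖ ≤ β̄, a matrix U^{xy} ∈ ℝ^{n_x×n_x} with ‖U^{xy}‖ ≤ γ̄, and a symmetric matrix R̂ ∈ ℝ^{n_y×n_y} with R̂ ⪰ r̂I for some r̂ > 0. Define Σ^y = U^y H Σ Hᵀ (U^y)ᵀ + R̂ and K = Σ U^{xy} Hᵀ (U^y)ᵀ (Σ^y)^{-1}. If the constants satisfy the strict inequality σ̄ γ̄ h̄² β̄² < r̂, then the matrix I_{n_x} − K U^y H is invertible. -/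
open Matrix
open scoped Matrix.Norms.L2Operator MatrixOrder

/-!
The spectral norm is submultiplicative, so
`‖K Uʸ H‖ ≤ ‖Σ‖ ‖Uˣʸ‖ ‖H‖² ‖Uʸ‖² ‖(Σʸ)⁻¹‖ ≤ σ̄ γ̄ h̄² β̄² / r̂ < 1`,
using `0 ⪯ Σ ⪯ σ̄ I` for `‖Σ‖ ≤ σ̄` and `Σʸ ⪰ R̂ ⪰ r̂ I` for `‖(Σʸ)⁻¹‖ ≤ 1 / r̂`.
A perturbation of the identity by an element of norm `< 1` is a unit (Neumann series).
Both norm bounds are spectral: in an algebra with an isometric continuous functional calculus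
the norm of a self-adjoint element is the largest absolute value of its spectrum.
-/

section IsometricCFC

variable {A : Type*} [NormedRing A] [StarRing A] [NormedAlgebra ℝ A] [PartialOrder A]
  [StarOrderedRing A] [IsometricContinuousFunctionalCalculus ℝ A IsSelfAdjoint]
  [NonnegSpectrumClass ℝ A]

open IsometricContinuousFunctionalCalculus in
theorem norm_le_of_nonneg_of_le_algebraMap [Nontrivial A] {a : A} {c : ℝ} (ha : 0 ≤ a)
    (hac : a ≤ algebraMap ℝ A c) : ‖a‖ ≤ c := by
  obtain ⟨⟨x, hx, hxa⟩, -⟩ := isGreatest_norm_spectrum (𝕜 := ℝ) a (IsSelfAdjoint.of_nonneg ha)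
  rw [← hxa]
  dsimp only
  rw [Real.norm_of_nonneg (spectrum_nonneg_of_nonneg ha hx)]
  exact (le_algebraMap_iff_spectrum_le (IsSelfAdjoint.of_nonneg ha)).mp hac x hx

theorem norm_ringInverse_le_of_algebraMap_le [StarModule ℝ A] {a : A} {r : ℝ} (hr : 0 < r)
    (hra : algebraMap ℝ A r ≤ a) : ‖Ring.inverse a‖ ≤ r⁻¹ := by
  have hsa : IsSelfAdjoint a := (IsSelfAdjoint.iff_of_le hra).mp (.algebraMap A (.all r))
  have hspec : ∀ x ∈ spectrum ℝ a, r ≤ x := (algebraMap_le_iff_le_spectrum hsa).mp hra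
  have hunit : IsUnit a := spectrum.isUnit_of_zero_notMem ℝ fun h0 => (hspec 0 h0).not_gt hr
  rw [← cfc_ringInverse_id (R := ℝ) a hunit hsa]
  refine norm_cfc_le (inv_nonneg.mpr hr.le) fun x hx => ?_
  rw [norm_inv, Real.norm_of_nonneg (hr.le.trans (hspec x hx))]
  exact inv_anti₀ hr (hspec x hx)

end IsometricCFC

namespace Matrix

variable {m n : Type*} [Fintype m] [Fintype n] [DecidableEq m] [DecidableEq n]

theorem l2_opNorm_transpose (A : Matrix m n ℝ) : ‖Aᵀ‖ = ‖A‖ := by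
  rw [← conjTranspose_eq_transpose_of_trivial, l2_opNorm_conjTranspose]

theorem l2_opNorm_gain_mul_le (S U : Matrix m m ℝ) (H : Matrix n m ℝ) (V P : Matrix n n ℝ) :
    ‖S * U * Hᵀ * Vᵀ * P * V * H‖ ≤ ‖S‖ * ‖U‖ * ‖H‖ ^ 2 * ‖V‖ ^ 2 * ‖P‖ := by
  calc ‖S * U * Hᵀ * Vᵀ * P * V * H‖
      ≤ ‖S‖ * ‖U‖ * ‖Hᵀ‖ * ‖Vᵀ‖ * ‖P‖ * ‖V‖ * ‖H‖ := by
        refine (l2_opNorm_mul _ _).trans (mul_le_mul_of_nonneg_right ?_ (norm_nonneg _))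
        refine (l2_opNorm_mul _ _).trans (mul_le_mul_of_nonneg_right ?_ (norm_nonneg _))
        refine (l2_opNorm_mul _ _).trans (mul_le_mul_of_nonneg_right ?_ (norm_nonneg _))
        refine (l2_opNorm_mul _ _).trans (mul_le_mul_of_nonneg_right ?_ (norm_nonneg _))
        refine (l2_opNorm_mul _ _).trans (mul_le_mul_of_nonneg_right ?_ (norm_nonneg _))
        exact l2_opNorm_mul _ _
    _ = ‖S‖ * ‖U‖ * ‖H‖ ^ 2 * ‖V‖ ^ 2 * ‖P‖ := by
        rw [l2_opNorm_transpose, l2_opNorm_transpose]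
        ring

end Matrix

theorem ckf_I_sub_KUH_invertible_general {nx ny : ℕ}
    (Sig : Matrix (Fin nx) (Fin nx) ℝ) (H : Matrix (Fin ny) (Fin nx) ℝ)
    (Uy : Matrix (Fin ny) (Fin ny) ℝ) (Uxy : Matrix (Fin nx) (Fin nx) ℝ)
    (Rhat : Matrix (Fin ny) (Fin ny) ℝ)
    (sigbar hbar betabar gambar rhat : ℝ) (hrhat : 0 < rhat)
    (hSig : Sig.PosSemidef)
    (hSigub : ((sigbar • (1 : Matrix (Fin nx) (Fin nx) ℝ)) - Sig).PosSemidef)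
    (hH : ‖H‖ ≤ hbar) (hUy : ‖Uy‖ ≤ betabar) (hUxy : ‖Uxy‖ ≤ gambar)
    (hRhatlb : (Rhat - (rhat • (1 : Matrix (Fin ny) (Fin ny) ℝ))).PosSemidef)
    (Sigy : Matrix (Fin ny) (Fin ny) ℝ) (K : Matrix (Fin nx) (Fin ny) ℝ)
    (hSigy : Sigy = Uy * H * Sig * Hᵀ * Uyᵀ + Rhat)
    (hK : K = Sig * Uxy * Hᵀ * Uyᵀ * Sigy⁻¹)
    (hC3 : sigbar * gambar * hbar ^ 2 * betabar ^ 2 < rhat) :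
    IsUnit ((1 : Matrix (Fin nx) (Fin nx) ℝ) - K * Uy * H) := by
  rcases isEmpty_or_nonempty (Fin nx) with hnx | hnx
  · exact isUnit_of_subsingleton _
  have hSig_norm : ‖Sig‖ ≤ sigbar :=
    norm_le_of_nonneg_of_le_algebraMap (nonneg_iff_posSemidef.mpr hSig)
      (by rwa [Algebra.algebraMap_eq_smul_one, le_iff])
  have hSigy_ge : algebraMap ℝ _ rhat ≤ Sigy := by
    have hM : 0 ≤ Uy * H * Sig * Hᵀ * Uyᵀ := by
      rw [nonneg_iff_posSemidef, ← conjTranspose_eq_transpose_of_trivial,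
        ← conjTranspose_eq_transpose_of_trivial, Matrix.mul_assoc _ Hᴴ, ← conjTranspose_mul]
      exact hSig.mul_mul_conjTranspose_same (Uy * H)
    rw [hSigy, Algebra.algebraMap_eq_smul_one]
    exact (le_iff.mpr hRhatlb).trans (le_add_of_nonneg_left hM)
  have hSigy_inv : ‖Sigy⁻¹‖ ≤ rhat⁻¹ := by
    rw [nonsing_inv_eq_ringInverse]
    exact norm_ringInverse_le_of_algebraMap_le hrhat hSigy_ge
  have hsmall : ‖K * Uy * H‖ < 1 := calc
    ‖K * Uy * H‖ ≤ ‖Sig‖ * ‖Uxy‖ * ‖H‖ ^ 2 * ‖Uy‖ ^ 2 * ‖Sigy⁻¹‖ := by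
      rw [hK]
      exact l2_opNorm_gain_mul_le _ _ _ _ _
    _ ≤ sigbar * gambar * hbar ^ 2 * betabar ^ 2 * rhat⁻¹ := by
      have := (norm_nonneg Sig).trans hSig_norm
      have := (norm_nonneg Uxy).trans hUxy
      gcongr
    _ < 1 := by rwa [← div_eq_mul_inv, div_lt_one hrhat]
  exact (Units.oneSub _ hsmall).isUnit

/-- **Invertibility of `I − K Uʸ H` in the CKF stability analysis (condition C3).**
Given a positive semidefinite `Σ ⪯ σ̄•I`, matrices `H, Uy, Uxy` with spectral-norm bounds
`‖H‖ ≤ h̄`, `‖Uy‖ ≤ β̄`, `‖Uxy‖ ≤ γ̄`, a symmetric `R̂ ⪰ r̂•I` with `r̂ > 0`,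
the innovation covariance `Σy = Uy H Σ Hᵀ Uyᵀ + R̂` and gain `K = Σ Uxy Hᵀ Uyᵀ (Σy)⁻¹`:
if `σ̄ γ̄ h̄² β̄² < r̂`, then `I − K Uy H` is invertible. -/
theorem ckf_I_sub_KUH_invertible {nx ny : ℕ}
    (Sig : Matrix (Fin nx) (Fin nx) ℝ) (H : Matrix (Fin ny) (Fin nx) ℝ)
    (Uy : Matrix (Fin ny) (Fin ny) ℝ) (Uxy : Matrix (Fin nx) (Fin nx) ℝ)
    (Rhat : Matrix (Fin ny) (Fin ny) ℝ)
    (sigbar hbar betabar gambar rhat : ℝ) (hrhat : 0 < rhat)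
    (hSig : Sig.PosSemidef)
    (hSigub : ((sigbar • (1 : Matrix (Fin nx) (Fin nx) ℝ)) - Sig).PosSemidef)
    (hH : ‖H‖ ≤ hbar) (hUy : ‖Uy‖ ≤ betabar) (hUxy : ‖Uxy‖ ≤ gambar)
    (hRhatsymm : Rhat.IsHermitian)
    (hRhatlb : (Rhat - (rhat • (1 : Matrix (Fin ny) (Fin ny) ℝ))).PosSemidef)
    (Sigy : Matrix (Fin ny) (Fin ny) ℝ) (K : Matrix (Fin nx) (Fin ny) ℝ)
    (hSigy : Sigy = Uy * H * Sig * Hᵀ * Uyᵀ + Rhat)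
    (hK : K = Sig * Uxy * Hᵀ * Uyᵀ * Sigy⁻¹)
    (hC3 : sigbar * gambar * hbar ^ 2 * betabar ^ 2 < rhat) :
    IsUnit ((1 : Matrix (Fin nx) (Fin nx) ℝ) - K * Uy * H) :=
  ckf_I_sub_KUH_invertible_general Sig H Uy Uxy Rhat sigbar hbar betabar gambar rhat hrhat hSig
    hSigub hH hUy hUxy hRhatlb Sigy K hSigy hK hC3
end

section
/- Let Σ ∈ ℝ^{n×n} be a symmetric positive definite matrix with Σ ⪯ σ̄I, let A ∈ ℝ^{n×n} be invertible with ‖A‖ ≤ ā for some ā > 0, and let Q̂ ∈ ℝ^{n×n} be a symmetric matrix with Q̂ ⪰ q̂I for some q̂ > 0. Then the Loewner-order inequality Aᵀ (A Σ Aᵀ + Q̂)^{-1} A ⪯ (1 + q̂/(ā² σ̄))^{-1} Σ^{-1} holds; in particular the contraction factor (1 + q̂/(ā²σ̄))^{-1} is strictly less than 1. -/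
/-!
Write `S = A Σ Aᵀ`. Since `Σ ⪯ σ̄ I` and `A Aᵀ ⪯ ‖A‖² I`, we get `S ⪯ ā² σ̄ I`, hence
`Q̂ ⪰ q̂ I ⪰ q S` with `q = q̂ / (ā² σ̄)`, i.e. `S + Q̂ ⪰ (1 + q) S`. Taking Schur complements of
the block matrix `[[S + Q̂, A], [Aᵀ, (1 + q)⁻¹ Σ⁻¹]]` in its two diagonal corners shows that this
inequality is equivalent to `Aᵀ (S + Q̂)⁻¹ A ⪯ (1 + q)⁻¹ Σ⁻¹`.
-/

open Matrix
open scoped Matrix.Norms.L2Operator MatrixOrder ComplexOrder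

namespace Matrix

variable {m n 𝕜 : Type*} [Fintype m] [Fintype n] [DecidableEq m] [DecidableEq n] [RCLike 𝕜]

omit [Fintype m] [DecidableEq m] [DecidableEq n] in
theorem star_dotProduct_self_eq_norm_sq (x : n → 𝕜) :
    star x ⬝ᵥ x = ((‖WithLp.toLp 2 x‖ ^ 2 : ℝ) : 𝕜) := by
  rw [RCLike.ofReal_pow, ← inner_self_eq_norm_sq_to_K, EuclideanSpace.inner_eq_star_dotProduct,
    dotProduct_comm]

omit [DecidableEq m] in
theorem conjTranspose_mul_self_le_l2_opNorm_sq_smul_one (A : Matrix m n 𝕜) :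
    Aᴴ * A ≤ (‖A‖ ^ 2) • (1 : Matrix n n 𝕜) := by
  rw [le_iff]
  refine PosSemidef.of_dotProduct_mulVec_nonneg ((isHermitian_one.smul (IsSelfAdjoint.all _)).sub
    (isHermitian_conjTranspose_mul_self A)) fun x => ?_
  have hquad : star x ⬝ᵥ ((‖A‖ ^ 2) • (1 : Matrix n n 𝕜) - Aᴴ * A) *ᵥ x
      = (((‖A‖ * ‖WithLp.toLp 2 x‖) ^ 2 - ‖WithLp.toLp 2 (A *ᵥ x)‖ ^ 2 : ℝ) : 𝕜) := by
    rw [sub_mulVec, dotProduct_sub, ← mulVec_mulVec, dotProduct_mulVec (star x) Aᴴ,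
      ← star_mulVec, star_dotProduct_self_eq_norm_sq, smul_mulVec, one_mulVec, dotProduct_smul,
      star_dotProduct_self_eq_norm_sq, RCLike.real_smul_eq_coe_mul]
    push_cast
    ring
  rw [hquad, RCLike.ofReal_nonneg, sub_nonneg]
  gcongr
  exact l2_opNorm_mulVec A (WithLp.toLp 2 x)

theorem mul_conjTranspose_le_l2_opNorm_sq_smul_one (A : Matrix m n 𝕜) :
    A * Aᴴ ≤ (‖A‖ ^ 2) • (1 : Matrix m m 𝕜) := by
  simpa [l2_opNorm_conjTranspose] using conjTranspose_mul_self_le_l2_opNorm_sq_smul_one Aᴴ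

omit [Fintype m] [Fintype n] [DecidableEq m] in
theorem PosDef.pos_of_le_smul_one [Nonempty n] {S : Matrix n n 𝕜} (hS : S.PosDef) {s : ℝ}
    (h : S ≤ s • (1 : Matrix n n 𝕜)) : 0 < s := by
  obtain ⟨i⟩ := ‹Nonempty n›
  have hdiag : S i i ≤ s := by
    simpa [RCLike.real_smul_eq_coe_mul] using (le_iff.mp h).diag_nonneg (i := i)
  exact RCLike.ofReal_pos.mp (hS.diag_pos.trans_le hdiag)

/-- Both sides say, by a Schur complement, that `fromBlocks M B Bᴴ D` is positive semidefinite. -/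
theorem PosDef.conjTranspose_mul_inv_mul_le_iff
    {M : Matrix m m 𝕜} {D : Matrix n n 𝕜} (hM : M.PosDef) (hD : D.PosDef) (B : Matrix m n 𝕜) :
    Bᴴ * M⁻¹ * B ≤ D ↔ B * D⁻¹ * Bᴴ ≤ M := by
  have := hM.isUnit.invertible
  have := hD.isUnit.invertible
  rw [le_iff, le_iff, ← PosDef.fromBlocks₁₁ B D hM, PosDef.fromBlocks₂₂ M B hD]

theorem mul_mul_conjTranspose_le_smul_one {A : Matrix m n 𝕜} {S : Matrix n n 𝕜} {a s : ℝ}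
    (hA : ‖A‖ ≤ a) (hs : 0 ≤ s) (hS : S ≤ s • (1 : Matrix n n 𝕜)) :
    A * S * Aᴴ ≤ (a ^ 2 * s) • (1 : Matrix m m 𝕜) :=
  calc A * S * Aᴴ ≤ A * (s • (1 : Matrix n n 𝕜)) * Aᴴ := by
        rw [le_iff, ← Matrix.sub_mul, ← Matrix.mul_sub]
        exact (le_iff.mp hS).mul_mul_conjTranspose_same A
    _ = s • (A * Aᴴ) := by simp
    _ ≤ s • (‖A‖ ^ 2 • (1 : Matrix m m 𝕜)) := by
        gcongr
        exact mul_conjTranspose_le_l2_opNorm_sq_smul_one A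
    _ ≤ s • (a ^ 2 • (1 : Matrix m m 𝕜)) := by gcongr
    _ = (a ^ 2 * s) • 1 := by rw [smul_smul, mul_comm]

theorem PosDef.conjTranspose_mul_inv_mul_le_inv_smul {S : Matrix n n 𝕜} {M : Matrix m m 𝕜}
    (hS : S.PosDef) (hM : M.PosDef) {c : ℝ} (hc : 0 < c) (A : Matrix m n 𝕜)
    (h : c • (A * S * Aᴴ) ≤ M) : Aᴴ * M⁻¹ * A ≤ c⁻¹ • S⁻¹ := by
  have hSinv : (c⁻¹ • S⁻¹)⁻¹ = c • S := by
    refine inv_eq_left_inv ?_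
    rw [smul_mul_smul, mul_inv_cancel₀ hc.ne', one_smul,
      mul_nonsing_inv S ((isUnit_iff_isUnit_det S).mp hS.isUnit)]
  rw [hM.conjTranspose_mul_inv_mul_le_iff (hS.inv.smul (inv_pos.2 hc)), hSinv]
  simpa using h

end Matrix

theorem riccati_contraction_general {n : ℕ} (hn : 0 < n)
    (Sig A Qhat : Matrix (Fin n) (Fin n) ℝ)
    (sigbar abar qhat : ℝ) (habar : 0 < abar) (hqhat : 0 < qhat)
    (hSig : Sig.PosDef)
    (hSigub : ((sigbar • (1 : Matrix (Fin n) (Fin n) ℝ)) - Sig).PosSemidef)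
    (hA : ‖A‖ ≤ abar)
    (hQhatlb : (Qhat - (qhat • (1 : Matrix (Fin n) (Fin n) ℝ))).PosSemidef) :
    ((1 + qhat / (abar ^ 2 * sigbar))⁻¹ • Sig⁻¹ - Aᵀ * (A * Sig * Aᵀ + Qhat)⁻¹ * A).PosSemidef
      ∧ (1 + qhat / (abar ^ 2 * sigbar))⁻¹ < 1 := by
  have : Nonempty (Fin n) := ⟨⟨0, hn⟩⟩
  have hsigbar : 0 < sigbar := hSig.pos_of_le_smul_one hSigub
  set q := qhat / (abar ^ 2 * sigbar) with hq_def
  have hq : 0 < q := by positivity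
  refine ⟨?_, inv_lt_one_of_one_lt₀ (by linarith)⟩
  rw [← conjTranspose_eq_transpose_of_trivial A]
  have hS : A * Sig * Aᴴ ≤ (abar ^ 2 * sigbar) • (1 : Matrix (Fin n) (Fin n) ℝ) :=
    mul_mul_conjTranspose_le_smul_one hA hsigbar.le hSigub
  have hQ : q • (A * Sig * Aᴴ) ≤ Qhat :=
    calc q • (A * Sig * Aᴴ) ≤ q • ((abar ^ 2 * sigbar) • (1 : Matrix (Fin n) (Fin n) ℝ)) := by
          gcongr
      _ = qhat • 1 := by rw [smul_smul, hq_def, div_mul_cancel₀ _ (by positivity)]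
      _ ≤ Qhat := hQhatlb
  have hM : (A * Sig * Aᴴ + Qhat).PosDef := by
    refine PosDef.posSemidef_add (hSig.posSemidef.mul_mul_conjTranspose_same A) ?_
    simpa using (PosDef.one.smul hqhat).add_posSemidef hQhatlb
  refine le_iff.mp (hSig.conjTranspose_mul_inv_mul_le_inv_smul hM (by positivity) A ?_)
  rw [add_smul, one_smul]
  gcongr

/-- **Riccati-type contraction inequality.**
Let `Σ` (here `Sig`) be symmetric positive definite with `Σ ⪯ σ̄•I`, let `A` be invertible with
`‖A‖ ≤ ā` for some `ā > 0`, and let `Q̂` be symmetric with `Q̂ ⪰ q̂•I` for some `q̂ > 0`. Then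
`Aᵀ (A Σ Aᵀ + Q̂)⁻¹ A ⪯ (1 + q̂/(ā² σ̄))⁻¹ • Σ⁻¹` in the Loewner order; in particular the
contraction factor `(1 + q̂/(ā² σ̄))⁻¹` is strictly less than `1`. -/
theorem riccati_contraction {n : ℕ} (hn : 0 < n)
    (Sig A Qhat : Matrix (Fin n) (Fin n) ℝ)
    (sigbar abar qhat : ℝ) (habar : 0 < abar) (hqhat : 0 < qhat)
    (hSig : Sig.PosDef)
    (hSigub : ((sigbar • (1 : Matrix (Fin n) (Fin n) ℝ)) - Sig).PosSemidef)
    (hAunit : IsUnit A) (hA : ‖A‖ ≤ abar)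
    (hQhatsymm : Qhat.IsHermitian)
    (hQhatlb : (Qhat - (qhat • (1 : Matrix (Fin n) (Fin n) ℝ))).PosSemidef) :
    ((1 + qhat / (abar ^ 2 * sigbar))⁻¹ • Sig⁻¹ - Aᵀ * (A * Sig * Aᵀ + Qhat)⁻¹ * A).PosSemidef
      ∧ (1 + qhat / (abar ^ 2 * sigbar))⁻¹ < 1 :=
  riccati_contraction_general hn Sig A Qhat sigbar abar qhat habar hqhat hSig hSigub hA hQhatlb
end

section
/- Let (Ω, 𝔉, P) be a probability space with filtration (𝔉_k)_{k≥0}, and for each k ≥ 0 let x̃ ∈ ℝⁿ be an 𝔉_k-measurable random vector, A an 𝔉_k-measurable random matrix, and e an ℝⁿ-valued random vector independent of 𝔉_k with E[e] = 0 and E[e eᵀ] ⪯ c̄ I for some c̄ ≥ 0. Suppose x̃' = A x̃ + e, and suppose Σ, Σ' are symmetric positive definite (possibly random, 𝔉_k-measurable) matrices with Σ' = A Σ Aᵀ + Q̂ for a symmetric 𝔉_k-measurable Q̂ ⪰ q̂I, q̂ > 0, where almost surely A is invertible, ‖A‖ ≤ ā and Σ ⪯ σ̄I. Then almost surely E[(x̃')ᵀ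 (Σ')^{-1} x̃' | 𝔉_k] ≤ (1 + q̂/(ā²σ̄))^{-1} x̃ᵀ Σ^{-1} x̃ + c̄ n / q̂. -/
/-!
Write `B = A Σ Aᵀ`. From `‖A‖ ≤ ā` and `Σ ⪯ σ̄ I` we get `B ⪯ ā²σ̄ I`, so
`Σ' = B + Q̂ ⪰ B + q̂ I ⪰ (1 + q̂/(ā²σ̄)) B`. Inversion is antitone in the Loewner order and
`(A x)ᵀ B⁻¹ (A x) = xᵀ Σ⁻¹ x`, so the part of `x̃'` predicted from `𝔉_k` contracts by
`(1 + q̂/(ā²σ̄))⁻¹`. Given `𝔉_k`, the cross terms of `(A x̃ + e)ᵀ Σ'⁻¹ (A x̃ + e)` have zero mean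
and the noise term has mean `tr(Σ'⁻¹ E[e eᵀ]) ≤ c̄ tr Σ'⁻¹ ≤ c̄ n / q̂`, as `Σ' ⪰ q̂ I`.
The `𝔉_k`-measurable coefficients need not be integrable, so this conditional expectation is
computed on the `𝔉_k`-measurable sets where they are bounded, which exhaust `Ω`.
-/

open Matrix MeasureTheory ProbabilityTheory
open scoped Matrix.Norms.L2Operator MatrixOrder

namespace Matrix

variable {ι : Type*} [Fintype ι]

theorem dotProduct_mulVec_le_of_le {A B : Matrix ι ι ℝ} (h : A ≤ B) (x : ι → ℝ) :
    x ⬝ᵥ A *ᵥ x ≤ x ⬝ᵥ B *ᵥ x := by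
  have := (le_iff.1 h).dotProduct_mulVec_nonneg x
  rw [star_trivial, sub_mulVec, dotProduct_sub] at this
  linarith

theorem mulVec_dotProduct_mulVec_mulVec (A M : Matrix ι ι ℝ) (x y : ι → ℝ) :
    (A *ᵥ x) ⬝ᵥ M *ᵥ (A *ᵥ y) = x ⬝ᵥ (Aᵀ * M * A) *ᵥ y := by
  rw [← mulVec_mulVec, ← mulVec_mulVec, dotProduct_mulVec x, vecMul_transpose]

theorem trace_mono : Monotone (trace : Matrix ι ι ℝ → ℝ) := fun A B h => by
  have := (le_iff.1 h).trace_nonneg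
  rw [trace_sub] at this
  linarith

-- Separates coefficients built from `u` and `M` from the monomials of degree one and two in `e`.
theorem dotProduct_add_mulVec_add_eq (M : Matrix ι ι ℝ) (u e : ι → ℝ) :
    (u + e) ⬝ᵥ M *ᵥ (u + e) = u ⬝ᵥ M *ᵥ u +
      ∑ k : ι ⊕ ι × ι, Sum.elim (fun j => (u ᵥ* M + M *ᵥ u) j) (fun p => M p.1 p.2) k *
        Sum.elim (fun j => e j) (fun p => e p.2 * e p.1) k := by
  have hlin : u ⬝ᵥ M *ᵥ e + e ⬝ᵥ M *ᵥ u = ∑ j, (u ᵥ* M + M *ᵥ u) j * e j := by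
    rw [dotProduct_mulVec, dotProduct_comm e, ← add_dotProduct, dotProduct]
  have hquad : e ⬝ᵥ M *ᵥ e = ∑ p : ι × ι, M p.1 p.2 * (e p.2 * e p.1) := by
    simp only [dotProduct, mulVec, Finset.mul_sum, Fintype.sum_prod_type]
    exact Finset.sum_congr rfl fun i _ => Finset.sum_congr rfl fun j _ => by ring
  simp only [Fintype.sum_sum_type, Sum.elim_inl, Sum.elim_inr, ← hquad, ← hlin, mulVec_add,
    dotProduct_add, add_dotProduct]
  ring

theorem measurable_mulVec_apply {Ω : Type*} {m : MeasurableSpace Ω} {M : Ω → Matrix ι ι ℝ}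
    {u : Ω → ι → ℝ} (hM : ∀ i j, Measurable[m] fun ω => M ω i j)
    (hu : ∀ j, Measurable[m] fun ω => u ω j) (i : ι) :
    Measurable[m] fun ω => (M ω *ᵥ u ω) i := by
  simp only [mulVec, dotProduct]
  exact Finset.measurable_sum _ fun j _ => (hM i j).mul (hu j)

variable [DecidableEq ι]

theorem mulVec_dotProduct_self_le_l2_opNorm_sq (A : Matrix ι ι ℝ) (x : ι → ℝ) :
    (A *ᵥ x) ⬝ᵥ (A *ᵥ x) ≤ ‖A‖ ^ 2 * (x ⬝ᵥ x) := by
  have hnorm (v : ι → ℝ) : v ⬝ᵥ v = ‖WithLp.toLp 2 v‖ ^ 2 := by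
    rw [← real_inner_self_eq_norm_sq, EuclideanSpace.inner_toLp_toLp, star_trivial]
  rw [hnorm, hnorm, ← mul_pow]
  exact pow_le_pow_left₀ (norm_nonneg _) (l2_opNorm_mulVec A (WithLp.toLp 2 x)) 2

theorem mul_mul_transpose_le_smul_one {A S : Matrix ι ι ℝ} {a σ : ℝ} (hS : S.IsHermitian)
    (hSσ : S ≤ σ • 1) (hσ : 0 ≤ σ) (hA : ‖A‖ ≤ a) :
    A * S * Aᵀ ≤ (a ^ 2 * σ) • 1 := by
  have hherm : ((a ^ 2 * σ) • 1 - A * S * Aᵀ).IsHermitian :=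
    (isHermitian_one.smul (IsSelfAdjoint.all _)).sub
      (by simpa using isHermitian_mul_mul_conjTranspose A hS)
  refine le_iff.2 (.of_dotProduct_mulVec_nonneg hherm fun y => ?_)
  have hS_y := dotProduct_mulVec_le_of_le hSσ (Aᵀ *ᵥ y)
  rw [smul_mulVec, one_mulVec, dotProduct_smul, smul_eq_mul,
    mulVec_dotProduct_mulVec_mulVec, transpose_transpose] at hS_y
  have hA_y := mulVec_dotProduct_self_le_l2_opNorm_sq Aᵀ y
  rw [← conjTranspose_eq_transpose_of_trivial, l2_opNorm_conjTranspose,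
    conjTranspose_eq_transpose_of_trivial] at hA_y
  have ha : ‖A‖ ^ 2 ≤ a ^ 2 := pow_le_pow_left₀ (norm_nonneg _) hA 2
  have hy : 0 ≤ y ⬝ᵥ y := by simpa using dotProduct_star_self_nonneg y
  rw [star_trivial, sub_mulVec, dotProduct_sub, smul_mulVec, one_mulVec, dotProduct_smul,
    smul_eq_mul, sub_nonneg]
  nlinarith [mul_le_mul_of_nonneg_left hA_y hσ, mul_le_mul_of_nonneg_right ha (mul_nonneg hσ hy)]

theorem inv_smul₀ {A : Matrix ι ι ℝ} {c : ℝ} (hc : c ≠ 0) (hA : IsUnit A) :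
    (c • A)⁻¹ = c⁻¹ • A⁻¹ :=
  inv_eq_left_inv (by simp [nonsing_inv_mul _ ((isUnit_iff_isUnit_det A).1 hA), smul_smul, hc])

theorem dotProduct_mulVec_inv_mul_mul_transpose {A S : Matrix ι ι ℝ} (hA : IsUnit A)
    (x : ι → ℝ) : (A *ᵥ x) ⬝ᵥ (A * S * Aᵀ)⁻¹ *ᵥ (A *ᵥ x) = x ⬝ᵥ S⁻¹ *ᵥ x := by
  have hAdet := (isUnit_iff_isUnit_det A).1 hA
  have hATdet : IsUnit Aᵀ.det := by rwa [det_transpose]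
  rw [mulVec_dotProduct_mulVec_mulVec, mul_inv_rev, mul_inv_rev, ← mul_assoc, ← mul_assoc,
    mul_nonsing_inv _ hATdet, one_mul, mul_assoc, nonsing_inv_mul _ hAdet, mul_one]

namespace PosDef

theorem pos_of_le_smul_one_s4 [Nonempty ι] {S : Matrix ι ι ℝ} {c : ℝ} (hS : S.PosDef)
    (h : S ≤ c • 1) : 0 < c := by
  have htrace := trace_mono h
  rw [trace_smul, trace_one, smul_eq_mul] at htrace
  have hcard : (0 : ℝ) < Fintype.card ι := by exact_mod_cast Fintype.card_pos
  exact pos_of_mul_pos_left (hS.trace_pos.trans_le htrace) hcard.le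

theorem mulVec_inv_mulVec {A : Matrix ι ι ℝ} (hA : A.PosDef) (x : ι → ℝ) :
    A *ᵥ (A⁻¹ *ᵥ x) = x := by
  rw [mulVec_mulVec, mul_nonsing_inv _ ((isUnit_iff_isUnit_det A).1 hA.isUnit), one_mulVec]

/-- The variational formula `xᵀ A⁻¹ x = max_y (2 xᵀ y - yᵀ A y)`, attained at `y = A⁻¹ x`. -/
theorem two_mul_dotProduct_sub_le {A : Matrix ι ι ℝ} (hA : A.PosDef) (x y : ι → ℝ) :
    2 * (x ⬝ᵥ y) - y ⬝ᵥ A *ᵥ y ≤ x ⬝ᵥ A⁻¹ *ᵥ x := by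
  have hsq := hA.posSemidef.dotProduct_mulVec_nonneg (y - A⁻¹ *ᵥ x)
  have hsymm : (A⁻¹ *ᵥ x) ⬝ᵥ A *ᵥ y = x ⬝ᵥ y := by
    rw [dotProduct_mulVec, ← mulVec_transpose, (isHermitian_iff_isSymm.1 hA.isHermitian).eq,
      hA.mulVec_inv_mulVec, dotProduct_comm]
  simp only [star_trivial, mulVec_sub, sub_dotProduct, dotProduct_sub, hA.mulVec_inv_mulVec,
    hsymm] at hsq
  rw [dotProduct_comm y x, dotProduct_comm (A⁻¹ *ᵥ x) x] at hsq
  linarith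

theorem inv_le_inv_of_le {A B : Matrix ι ι ℝ} (hA : A.PosDef) (hAB : A ≤ B) :
    B⁻¹ ≤ A⁻¹ := by
  have hB : B.PosDef := by simpa using hA.add_posSemidef (le_iff.1 hAB)
  refine le_iff.2 (.of_dotProduct_mulVec_nonneg (hA.inv.isHermitian.sub hB.inv.isHermitian)
    fun x => ?_)
  have hvar := hA.two_mul_dotProduct_sub_le x (B⁻¹ *ᵥ x)
  have hmono := dotProduct_mulVec_le_of_le hAB (B⁻¹ *ᵥ x)
  rw [hB.mulVec_inv_mulVec, dotProduct_comm (B⁻¹ *ᵥ x) x] at hmono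
  rw [star_trivial, sub_mulVec, dotProduct_sub]
  linarith

end PosDef

theorem PosSemidef.trace_mul_nonneg {A B : Matrix ι ι ℝ} (hA : A.PosSemidef)
    (hB : B.PosSemidef) : 0 ≤ (A * B).trace := by
  obtain ⟨S, hS, rfl⟩ : ∃ S : Matrix ι ι ℝ, S.IsHermitian ∧ A = S * S :=
    ⟨CFC.sqrt A, (CFC.sqrt_nonneg A).posSemidef.isHermitian,
      (CFC.sqrt_mul_sqrt_self A hA.nonneg).symm⟩
  rw [mul_assoc, trace_mul_comm]
  simpa only [hS.eq] using (hB.conjTranspose_mul_mul_same S).trace_nonneg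

theorem PosSemidef.trace_mul_le_of_le_smul_one {M C : Matrix ι ι ℝ} {c : ℝ}
    (hM : M.PosSemidef) (hC : C ≤ c • 1) : (M * C).trace ≤ c * M.trace := by
  have := hM.trace_mul_nonneg (le_iff.1 hC)
  rw [mul_sub, trace_sub, Matrix.mul_smul, mul_one, trace_smul, smul_eq_mul] at this
  linarith

theorem trace_inv_mul_le {S C : Matrix ι ι ℝ} {c q : ℝ} (hc : 0 ≤ c) (hq : 0 < q)
    (hS : q • 1 ≤ S) (hC : C ≤ c • 1) : (S⁻¹ * C).trace ≤ c * Fintype.card ι / q := by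
  have hq1 : (q • 1 : Matrix ι ι ℝ).PosDef := PosDef.one.smul hq
  have hSinv : S⁻¹ ≤ q⁻¹ • 1 := by
    simpa [inv_smul₀ hq.ne' isUnit_one] using hq1.inv_le_inv_of_le hS
  have hS : S.PosDef := by simpa using hq1.add_posSemidef (le_iff.1 hS)
  have htr := trace_mono hSinv
  rw [trace_smul, trace_one, smul_eq_mul] at htr
  calc (S⁻¹ * C).trace ≤ c * S⁻¹.trace := hS.inv.posSemidef.trace_mul_le_of_le_smul_one hC
    _ ≤ c * (q⁻¹ * Fintype.card ι) := mul_le_mul_of_nonneg_left htr hc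
    _ = c * Fintype.card ι / q := by ring

theorem smul_one_le_mul_mul_transpose_add {A S Q : Matrix ι ι ℝ} {q : ℝ} (hS : S.PosSemidef)
    (hQ : q • 1 ≤ Q) : q • 1 ≤ A * S * Aᵀ + Q :=
  le_add_of_nonneg_of_le (by simpa [conjTranspose_eq_transpose_of_trivial] using
    (hS.mul_mul_conjTranspose_same A).nonneg) hQ

theorem dotProduct_inv_mul_mul_transpose_add_le {A S Q : Matrix ι ι ℝ} {q ρ : ℝ} (hq : 0 < q)
    (hρ : 0 < ρ) (hS : S.PosDef) (hA : IsUnit A) (hASA : A * S * Aᵀ ≤ ρ • 1) (hQ : q • 1 ≤ Q)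
    (x : ι → ℝ) :
    (A *ᵥ x) ⬝ᵥ (A * S * Aᵀ + Q)⁻¹ *ᵥ (A *ᵥ x) ≤ (1 + q / ρ)⁻¹ * (x ⬝ᵥ S⁻¹ *ᵥ x) := by
  set B := A * S * Aᵀ
  have hB : B.PosDef := by
    simpa [conjTranspose_eq_transpose_of_trivial] using
      hS.mul_mul_conjTranspose_same (vecMul_injective_iff_isUnit.2 hA)
  have hdom : (1 + q / ρ) • B ≤ B + Q := by
    have hsplit : B + Q - (1 + q / ρ) • B = (Q - q • 1) + (q / ρ) • (ρ • 1 - B) := by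
      rw [smul_sub, smul_smul, div_mul_cancel₀ q hρ.ne', add_smul, one_smul]
      abel
    rw [le_iff, hsplit]
    exact (le_iff.1 hQ).add ((le_iff.1 hASA).smul (by positivity))
  have hinv := (hB.smul (by positivity : (0 : ℝ) < 1 + q / ρ)).inv_le_inv_of_le hdom
  rw [inv_smul₀ (by positivity) hB.isUnit] at hinv
  calc _ ≤ (A *ᵥ x) ⬝ᵥ ((1 + q / ρ)⁻¹ • B⁻¹) *ᵥ (A *ᵥ x) := dotProduct_mulVec_le_of_le hinv _
    _ = _ := by
      rw [smul_mulVec, dotProduct_smul, smul_eq_mul, dotProduct_mulVec_inv_mul_mul_transpose hA]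

theorem measurable_inv_apply {Ω : Type*} {m : MeasurableSpace Ω} {S : Ω → Matrix ι ι ℝ}
    (hS : ∀ i j, Measurable[m] fun ω => S ω i j) (i j : ι) :
    Measurable[m] fun ω => (S ω)⁻¹ i j := by
  have hS' : Measurable[m] fun ω => of.symm (S ω) :=
    measurable_pi_iff.2 fun i => measurable_pi_iff.2 (hS i)
  have hof : Continuous fun M : ι → ι → ℝ => of M := continuous_id
  have hdet : Measurable fun M : ι → ι → ℝ => (of M).det := hof.matrix_det.measurable
  have hadj : Measurable fun M : ι → ι → ℝ => adjugate (of M) i j :=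
    (hof.matrix_adjugate.matrix_elem i j).measurable
  simp only [inv_def, smul_apply, smul_eq_mul, Ring.inverse_eq_inv']
  exact (hdet.comp hS').inv.mul (hadj.comp hS')

end Matrix

section CondExp

variable {Ω : Type*} {m m₁ mΩ : MeasurableSpace Ω} {μ : Measure Ω}

theorem condExp_ae_eq_of_indicator_ae_eq {f g : Ω → ℝ} (hf : Integrable f μ)
    {s : ℕ → Set Ω} (hs : ∀ N, MeasurableSet[m] (s N)) (hcover : ∀ ω, ∃ N, ω ∈ s N)
    (h : ∀ N, μ[(s N).indicator f | m] =ᵐ[μ] (s N).indicator g) : μ[f | m] =ᵐ[μ] g := by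
  have hloc : ∀ N, ∀ᵐ ω ∂μ, ω ∈ s N → μ[f | m] ω = g ω := fun N => by
    filter_upwards [condExp_indicator hf (hs N), h N] with ω h₁ h₂ hω
    simpa [hω] using h₁.symm.trans h₂
  filter_upwards [ae_all_iff.2 hloc] with ω hω
  obtain ⟨N, hN⟩ := hcover ω
  exact hω N hN

variable [IsFiniteMeasure μ] {κ : Type*} [Fintype κ]

theorem condExp_add_sum_mul_indep_of_bounded (hle₁ : m₁ ≤ mΩ) (hm : m ≤ mΩ)
    [SigmaFinite (μ.trim hm)] (hind : Indep m₁ m μ) {g : Ω → ℝ} {a X : κ → Ω → ℝ} {C : ℝ}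
    (hg : Measurable[m] g) (hg_bdd : ∀ ω, |g ω| ≤ C) (ha : ∀ k, Measurable[m] (a k))
    (ha_bdd : ∀ k ω, |a k ω| ≤ C) (hX : ∀ k, Measurable[m₁] (X k))
    (hX_int : ∀ k, Integrable (X k) μ) :
    μ[fun ω => g ω + ∑ k, a k ω * X k ω | m] =ᵐ[μ]
      fun ω => g ω + ∑ k, a k ω * ∫ x, X k x ∂μ := by
  have hg_int : Integrable g μ :=
    .of_bound (hg.mono hm le_rfl).aestronglyMeasurable C (ae_of_all _ hg_bdd)
  have hterm_int (k : κ) : Integrable (a k * X k) μ :=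
    (hX_int k).bdd_mul ((ha k).mono hm le_rfl).aestronglyMeasurable (ae_of_all _ (ha_bdd k))
  have hterm (k : κ) : μ[a k * X k | m] =ᵐ[μ] fun ω => a k ω * ∫ x, X k x ∂μ := by
    filter_upwards [condExp_stronglyMeasurable_mul_of_bound hm (ha k).stronglyMeasurable
      (hX_int k) C (ae_of_all _ (ha_bdd k)),
      condExp_indep_eq hle₁ hm (hX k).stronglyMeasurable hind] with ω h₁ h₂
    rw [h₁, Pi.mul_apply, h₂]
  have hsum : (fun ω => g ω + ∑ k, a k ω * X k ω) = g + ∑ k, a k * X k := by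
    ext ω; simp [Finset.sum_apply]
  rw [hsum]
  filter_upwards [condExp_add hg_int (integrable_finsetSum' _ fun k _ => hterm_int k) m,
    condExp_finsetSum (s := Finset.univ) (fun k _ => hterm_int k) m, ae_all_iff.2 hterm]
    with ω h₁ h₂ h₃
  rw [h₁, Pi.add_apply, condExp_of_stronglyMeasurable hm hg.stronglyMeasurable hg_int, h₂,
    Finset.sum_apply]
  simp only [h₃]

theorem condExp_add_sum_mul_indep (hle₁ : m₁ ≤ mΩ) (hm : m ≤ mΩ)
    [SigmaFinite (μ.trim hm)] (hind : Indep m₁ m μ) {g : Ω → ℝ} {a X : κ → Ω → ℝ}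
    (hg : Measurable[m] g) (ha : ∀ k, Measurable[m] (a k)) (hX : ∀ k, Measurable[m₁] (X k))
    (hX_int : ∀ k, Integrable (X k) μ)
    (hint : Integrable (fun ω => g ω + ∑ k, a k ω * X k ω) μ) :
    μ[fun ω => g ω + ∑ k, a k ω * X k ω | m] =ᵐ[μ]
      fun ω => g ω + ∑ k, a k ω * ∫ x, X k x ∂μ := by
  set s : ℕ → Set Ω := fun N => {ω | |g ω| ≤ N ∧ ∀ k, |a k ω| ≤ N}
  have hs (N : ℕ) : MeasurableSet[m] (s N) := by
    have : s N = (fun ω => |g ω|) ⁻¹' Set.Iic N ∩ ⋂ k, (fun ω => |a k ω|) ⁻¹' Set.Iic N := by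
      ext ω; simp [s]
    rw [this]
    exact (continuous_abs.measurable.comp hg measurableSet_Iic).inter
      (.iInter fun k => continuous_abs.measurable.comp (ha k) measurableSet_Iic)
  have hcover (ω : Ω) : ∃ N, ω ∈ s N := by
    obtain ⟨N, hN⟩ := exists_nat_ge (|g ω| + ∑ k, |a k ω|)
    refine ⟨N, ?_, fun k => ?_⟩
    · linarith [Finset.sum_nonneg fun k (_ : k ∈ Finset.univ) => abs_nonneg (a k ω)]
    · linarith [Finset.single_le_sum (fun k _ => abs_nonneg (a k ω)) (Finset.mem_univ k),
        abs_nonneg (g ω)]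
  refine condExp_ae_eq_of_indicator_ae_eq hint hs hcover fun N => ?_
  have hbdd {h : Ω → ℝ} (hh : ∀ ω ∈ s N, |h ω| ≤ N) (ω : Ω) : |(s N).indicator h ω| ≤ N := by
    by_cases hω : ω ∈ s N <;> simp [hω, hh]
  have hloc := condExp_add_sum_mul_indep_of_bounded hle₁ hm hind
    (hg.indicator (hs N)) (hbdd fun ω hω => hω.1) (fun k => (ha k).indicator (hs N))
    (fun k => hbdd fun ω hω => hω.2 k) hX hX_int
  convert hloc using 1
  · congr 1
    ext ω
    by_cases hω : ω ∈ s N <;> simp [hω]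
  · ext ω
    by_cases hω : ω ∈ s N <;> simp [hω]

variable {ι : Type*} [Fintype ι]

theorem condExp_dotProduct_add_mulVec_add_indep (hm : m ≤ mΩ) [SigmaFinite (μ.trim hm)]
    {u e : Ω → ι → ℝ} {M : Ω → Matrix ι ι ℝ} (hu : ∀ i, Measurable[m] fun ω => u ω i)
    (hM : ∀ i j, Measurable[m] fun ω => M ω i j) (he : Measurable e)
    (hind : Indep (MeasurableSpace.comap e inferInstance) m μ)
    (he_mean : ∀ i, ∫ ω, e ω i ∂μ = 0) (he_int : ∀ i j, Integrable (fun ω => e ω i * e ω j) μ)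
    (hint : Integrable (fun ω => (u ω + e ω) ⬝ᵥ M ω *ᵥ (u ω + e ω)) μ) :
    μ[fun ω => (u ω + e ω) ⬝ᵥ M ω *ᵥ (u ω + e ω) | m] =ᵐ[μ]
      fun ω => u ω ⬝ᵥ M ω *ᵥ u ω + (M ω * of fun i j => ∫ ω', e ω' i * e ω' j ∂μ).trace := by
  have hMu := measurable_mulVec_apply hM hu
  have huM (j : ι) : Measurable[m] fun ω => (u ω ᵥ* M ω) j := by
    simp only [vecMul, dotProduct]
    exact Finset.measurable_sum _ fun i _ => (hu i).mul (hM i j)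
  have he_comap (i : ι) : Measurable[MeasurableSpace.comap e inferInstance] fun ω => e ω i :=
    (measurable_pi_apply i).comp (comap_measurable e)
  have he_i_int (i : ι) : Integrable (fun ω => e ω i) μ :=
    ((memLp_two_iff_integrable_sq ((measurable_pi_apply i).comp he).aestronglyMeasurable).2
      (by simpa [sq] using he_int i i)).integrable one_le_two
  simp only [dotProduct_add_mulVec_add_eq] at hint ⊢
  refine (condExp_add_sum_mul_indep he.comap_le hm hind ?_ ?_ ?_ ?_ hint).trans
    (ae_of_all _ fun ω => ?_)
  · simp only [dotProduct]
    exact Finset.measurable_sum _ fun i _ => (hu i).mul (hMu i)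
  · rintro (j | p)
    · exact (huM j).add (hMu j)
    · exact hM p.1 p.2
  · rintro (j | p)
    · exact he_comap j
    · exact (he_comap p.2).mul (he_comap p.1)
  · rintro (j | p)
    · exact he_i_int j
    · exact he_int p.2 p.1
  · simp [Fintype.sum_sum_type, Fintype.sum_prod_type, he_mean, trace, mul_apply]

end CondExp

theorem one_step_lyapunov_estimate_general {Ω : Type*} {mΩ : MeasurableSpace Ω}
    (P : Measure Ω) [IsProbabilityMeasure P]
    (F : Filtration ℕ mΩ) (k : ℕ) {n : ℕ} (hn : 0 < n)
    (xt xt' : Ω → Fin n → ℝ) (A : Ω → Matrix (Fin n) (Fin n) ℝ)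
    (e : Ω → Fin n → ℝ)
    (Sig Sig' Qhat : Ω → Matrix (Fin n) (Fin n) ℝ)
    (cbar qhat abar sigbar : ℝ) (hcbar : 0 ≤ cbar) (hqhat : 0 < qhat)
    (hxt_meas : Measurable[F k] xt)
    (hA_meas : ∀ i j, Measurable[F k] (fun ω => A ω i j))
    (hSig'_meas : ∀ i j, Measurable[F k] (fun ω => Sig' ω i j))
    (he_meas : Measurable e)
    (he_indep : Indep (MeasurableSpace.comap e inferInstance) (F k) P)
    (he_mean : ∀ i, ∫ ω, e ω i ∂P = 0)
    (he_int : ∀ i j, Integrable (fun ω => e ω i * e ω j) P)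
    (he_cov : ((cbar • (1 : Matrix (Fin n) (Fin n) ℝ)) -
        Matrix.of (fun i j => ∫ ω, e ω i * e ω j ∂P)).PosSemidef)
    (hSig_pd : ∀ ω, (Sig ω).PosDef)
    (hQhat_lb : ∀ ω, (Qhat ω - (qhat • (1 : Matrix (Fin n) (Fin n) ℝ))).PosSemidef)
    (hstep : ∀ ω, xt' ω = (A ω) *ᵥ (xt ω) + e ω)
    (hrec : ∀ ω, Sig' ω = A ω * Sig ω * (A ω)ᵀ + Qhat ω)
    (hA_as : ∀ᵐ ω ∂P, IsUnit (A ω) ∧ ‖A ω‖ ≤ abar ∧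
        ((sigbar • (1 : Matrix (Fin n) (Fin n) ℝ)) - Sig ω).PosSemidef) :
    ∀ᵐ ω ∂P,
      (P[fun ω' => xt' ω' ⬝ᵥ ((Sig' ω')⁻¹ *ᵥ xt' ω') | F k]) ω ≤
        (1 + qhat / (abar ^ 2 * sigbar))⁻¹ * (xt ω ⬝ᵥ ((Sig ω)⁻¹ *ᵥ xt ω)) +
          cbar * n / qhat := by
  have : Nonempty (Fin n) := ⟨⟨0, hn⟩⟩
  obtain ⟨ω₀, hA₀, hnorm₀, hSig₀⟩ := hA_as.exists
  have hsigbar : 0 < sigbar := (hSig_pd ω₀).pos_of_le_smul_one_s4 hSig₀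
  have habar : 0 < abar := (norm_pos_iff.2 hA₀.ne_zero).trans_le hnorm₀
  have hcontract : ∀ᵐ ω ∂P, (A ω *ᵥ xt ω) ⬝ᵥ (Sig' ω)⁻¹ *ᵥ (A ω *ᵥ xt ω) ≤
      (1 + qhat / (abar ^ 2 * sigbar))⁻¹ * (xt ω ⬝ᵥ (Sig ω)⁻¹ *ᵥ xt ω) := by
    filter_upwards [hA_as] with ω ⟨hA, hnorm, hSig⟩
    rw [hrec ω]
    exact dotProduct_inv_mul_mul_transpose_add_le hqhat (by positivity) (hSig_pd ω) hA
      (mul_mul_transpose_le_smul_one (hSig_pd ω).isHermitian hSig hsigbar.le hnorm)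
      (hQhat_lb ω) (xt ω)
  have htrace (ω : Ω) :
      ((Sig' ω)⁻¹ * of fun i j => ∫ ω', e ω' i * e ω' j ∂P).trace ≤ cbar * n / qhat := by
    simpa [← hrec ω] using trace_inv_mul_le hcbar hqhat
      (smul_one_le_mul_mul_transpose_add (A := A ω) (hSig_pd ω).posSemidef (hQhat_lb ω)) he_cov
  obtain rfl : xt' = fun ω => A ω *ᵥ xt ω + e ω := funext hstep
  by_cases hint :
      Integrable (fun ω => (A ω *ᵥ xt ω + e ω) ⬝ᵥ (Sig' ω)⁻¹ *ᵥ (A ω *ᵥ xt ω + e ω)) P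
  · have hAx := measurable_mulVec_apply (u := xt) hA_meas
      fun j => (measurable_pi_apply j).comp hxt_meas
    filter_upwards [condExp_dotProduct_add_mulVec_add_indep (F.le k) hAx
      (measurable_inv_apply hSig'_meas) he_meas he_indep he_mean he_int hint, hcontract]
      with ω hω hω'
    rw [hω]
    exact add_le_add hω' (htrace ω)
  · rw [condExp_of_not_integrable hint]
    refine ae_of_all _ fun ω => add_nonneg (mul_nonneg (by positivity) ?_) (by positivity)
    simpa using (hSig_pd ω).inv.posSemidef.dotProduct_mulVec_nonneg (xt ω)

/-- **One-step stochastic Lyapunov estimate.**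
On a filtered probability space, let `x̃` (here `xt`), `A`, `Σ` (`Sig`), `Σ'` (`Sig'`), `Q̂`
be `𝔉 k`-measurable, let `e` be independent of `𝔉 k` with zero mean and covariance `⪯ c̄•I`,
and suppose `x̃' = A x̃ + e` and `Σ' = A Σ Aᵀ + Q̂` with `Q̂ ⪰ q̂•I`, `q̂ > 0`, where almost surely
`A` is invertible, `‖A‖ ≤ ā` and `Σ ⪯ σ̄•I`. Then almost surely
`E[(x̃')ᵀ(Σ')⁻¹ x̃' | 𝔉 k] ≤ (1 + q̂/(ā²σ̄))⁻¹ x̃ᵀ Σ⁻¹ x̃ + c̄ n / q̂`. -/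
theorem one_step_lyapunov_estimate {Ω : Type*} {mΩ : MeasurableSpace Ω}
    (P : Measure Ω) [IsProbabilityMeasure P]
    (F : Filtration ℕ mΩ) (k : ℕ) {n : ℕ} (hn : 0 < n)
    (xt xt' : Ω → Fin n → ℝ) (A : Ω → Matrix (Fin n) (Fin n) ℝ)
    (e : Ω → Fin n → ℝ)
    (Sig Sig' Qhat : Ω → Matrix (Fin n) (Fin n) ℝ)
    (cbar qhat abar sigbar : ℝ) (hcbar : 0 ≤ cbar) (hqhat : 0 < qhat)
    (hxt_meas : Measurable[F k] xt)
    (hA_meas : ∀ i j, Measurable[F k] (fun ω => A ω i j))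
    (hSig_meas : ∀ i j, Measurable[F k] (fun ω => Sig ω i j))
    (hSig'_meas : ∀ i j, Measurable[F k] (fun ω => Sig' ω i j))
    (hQhat_meas : ∀ i j, Measurable[F k] (fun ω => Qhat ω i j))
    (he_meas : Measurable e)
    (he_indep : Indep (MeasurableSpace.comap e inferInstance) (F k) P)
    (he_mean : ∀ i, ∫ ω, e ω i ∂P = 0)
    (he_int : ∀ i j, Integrable (fun ω => e ω i * e ω j) P)
    (he_cov : ((cbar • (1 : Matrix (Fin n) (Fin n) ℝ)) -
        Matrix.of (fun i j => ∫ ω, e ω i * e ω j ∂P)).PosSemidef)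
    (hSig_pd : ∀ ω, (Sig ω).PosDef) (hSig'_pd : ∀ ω, (Sig' ω).PosDef)
    (hQhat_symm : ∀ ω, (Qhat ω).IsHermitian)
    (hQhat_lb : ∀ ω, (Qhat ω - (qhat • (1 : Matrix (Fin n) (Fin n) ℝ))).PosSemidef)
    (hstep : ∀ ω, xt' ω = (A ω) *ᵥ (xt ω) + e ω)
    (hrec : ∀ ω, Sig' ω = A ω * Sig ω * (A ω)ᵀ + Qhat ω)
    (hA_as : ∀ᵐ ω ∂P, IsUnit (A ω) ∧ ‖A ω‖ ≤ abar ∧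
        ((sigbar • (1 : Matrix (Fin n) (Fin n) ℝ)) - Sig ω).PosSemidef) :
    ∀ᵐ ω ∂P,
      (P[fun ω' => xt' ω' ⬝ᵥ ((Sig' ω')⁻¹ *ᵥ xt' ω') | F k]) ω ≤
        (1 + qhat / (abar ^ 2 * sigbar))⁻¹ * (xt ω ⬝ᵥ ((Sig ω)⁻¹ *ᵥ xt ω)) +
          cbar * n / qhat :=
  one_step_lyapunov_estimate_general P F k hn xt xt' A e Sig Sig' Qhat cbar qhat abar sigbar hcbar
    hqhat hxt_meas hA_meas hSig'_meas he_meas he_indep he_mean he_int he_cov hSig_pd hQhat_lb hstep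
    hrec hA_as
end
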